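/- Let X₁, X₂ : ℝ³ → ℝ³ be smooth vector fields and let Ω be a bounded open subset of ℝ³ such that X₁, X₂, and [X₁,X₂] are linearly independent at every point of the closure of Ω. Then there exists T > 0 such that the following holds: if q : [0,T'] → ℝ³ is a time-optimal trajectory of the control system contained in Ω with T' ≤ T, admitting an extremal lift λ with φ₁₂(t) ≠ 0 for all t ∈ [0,T'], then q is bang-bang, i.e. [0,T'] is the union of the closures of finitely many bang arcs. -/

import Mathlib

/-!
Along an extremal the switching functions satisfy `φ₁' = -u₂ φ₁₂` and `φ₂' = u₁ φ₁₂` a.e.,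
and the maximality condition forces `uᵢ = sign φᵢ` wherever `φᵢ ≠ 0`. Since `φ₁₂` has constant
sign, `φ₁` is strictly monotone on every interval where `φ₂` does not vanish, and symmetrically;
so a zero of one switching function at which the other does not vanish is isolated. The
maximized Hamiltonian `|φ₁| + |φ₂|` is constant. If it vanishes, then `u = 0` a.e. and the
trajectory is a loop, contradicting time-optimality. Otherwise `φ₁` and `φ₂` have no common zero,
their zero set in `[0,T']` is discrete and compact, hence finite, and consecutive zeros bound
the bang arcs.
-/

open MeasureTheory Set
open scoped RealInnerProductSpace

noncomputable section

/-- The state space `ℝ³`, with its Euclidean inner product. -/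
abbrev E3 : Type := EuclideanSpace ℝ (Fin 3)

/-- Lie bracket of vector fields: `[X,Y] = DY·X − DX·Y`. -/
def lieBracketVF {E : Type*} [NormedAddCommGroup E] [NormedSpace ℝ E]
    (X Y : E → E) : E → E :=
  fun x => fderiv ℝ Y x (X x) - fderiv ℝ X x (Y x)

/-- `X₁₂ = [X₁, X₂]`. -/
def X12 (X₁ X₂ : E3 → E3) : E3 → E3 := lieBracketVF X₁ X₂

/-- `X₊₁₂ = [X₁ + X₂, X₁₂]`. -/
def Xp12 (X₁ X₂ : E3 → E3) : E3 → E3 :=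
  lieBracketVF (fun x => X₁ x + X₂ x) (X12 X₁ X₂)

/-- `X₋₁₂ = [X₁ − X₂, X₁₂]`. -/
def Xm12 (X₁ X₂ : E3 → E3) : E3 → E3 :=
  lieBracketVF (fun x => X₁ x - X₂ x) (X12 X₁ X₂)

/-- An admissible pair on `[0,T]`: a measurable control `u = (u₁,u₂)` with values in
`[−1,1]²` together with an absolutely continuous trajectory `q` (encoded by the
integral representation) satisfying `q' = u₁X₁(q) + u₂X₂(q)` a.e. on `[0,T]`. -/
def IsAdmissiblePair (X₁ X₂ : E3 → E3) (T : ℝ) (q : ℝ → E3) (u : ℝ → ℝ × ℝ) : Prop :=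
  0 ≤ T ∧ Measurable u ∧ (∀ t ∈ Icc (0:ℝ) T, |(u t).1| ≤ 1 ∧ |(u t).2| ≤ 1) ∧
    IntegrableOn (fun s => (u s).1 • X₁ (q s) + (u s).2 • X₂ (q s)) (Icc 0 T) ∧
    ∀ t ∈ Icc (0:ℝ) T,
      q t = q 0 + ∫ s in Icc (0:ℝ) t, ((u s).1 • X₁ (q s) + (u s).2 • X₂ (q s))

/-- A trajectory `q` on `[0,T]` is time-optimal if no admissible pair on a
shorter interval `[0,T'']` joins `q 0` to `q T`. -/
def IsTimeOptimal (X₁ X₂ : E3 → E3) (T : ℝ) (q : ℝ → E3) : Prop :=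
  ¬ ∃ (T'' : ℝ) (q' : ℝ → E3) (u' : ℝ → ℝ × ℝ),
      T'' < T ∧ IsAdmissiblePair X₁ X₂ T'' q' u' ∧ q' 0 = q 0 ∧ q' T'' = q T

/-- Right-hand side of the adjoint equation: `−(Dₓ(u₁X₁ + u₂X₂)(q t))ᵀ λ(t)`. -/
def adjVec (X₁ X₂ : E3 → E3) (u : ℝ → ℝ × ℝ) (q lam : ℝ → E3) (t : ℝ) : E3 :=
  -(ContinuousLinearMap.adjoint
      ((u t).1 • fderiv ℝ X₁ (q t) + (u t).2 • fderiv ℝ X₂ (q t)) (lam t))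

/-- An extremal lift of an admissible pair `(q,u)` on `[0,T]`: a nonvanishing
absolutely continuous solution of the adjoint equation satisfying the
maximality condition of the PMP a.e. -/
def IsExtremalLift (X₁ X₂ : E3 → E3) (T : ℝ) (q : ℝ → E3) (u : ℝ → ℝ × ℝ)
    (lam : ℝ → E3) : Prop :=
  (∀ t ∈ Icc (0:ℝ) T, lam t ≠ 0) ∧
    IntegrableOn (adjVec X₁ X₂ u q lam) (Icc 0 T) ∧
    (∀ t ∈ Icc (0:ℝ) T, lam t = lam 0 + ∫ s in Icc (0:ℝ) t, adjVec X₁ X₂ u q lam s) ∧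
    ∀ᵐ t ∂volume, t ∈ Icc (0:ℝ) T →
      (u t).1 * ⟪lam t, X₁ (q t)⟫ + (u t).2 * ⟪lam t, X₂ (q t)⟫ =
        |⟪lam t, X₁ (q t)⟫| + |⟪lam t, X₂ (q t)⟫|

/-- The switching function `t ↦ ⟨λ(t), X(q(t))⟩` associated with a vector field `X`. -/
def phiF (X : E3 → E3) (q lam : ℝ → E3) (t : ℝ) : ℝ := ⟪lam t, X (q t)⟫

/-- `(a,b)` is a bang arc: a maximal open subinterval of `[0,T]` on which both
`φ₁` and `φ₂` are nonvanishing. -/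
def IsBangArc (T : ℝ) (φ₁ φ₂ : ℝ → ℝ) (a b : ℝ) : Prop :=
  0 ≤ a ∧ a < b ∧ b ≤ T ∧ (∀ t ∈ Ioo a b, φ₁ t ≠ 0 ∧ φ₂ t ≠ 0) ∧
    ∀ a' b', 0 ≤ a' → a' ≤ a → b ≤ b' → b' ≤ T →
      (∀ t ∈ Ioo a' b', φ₁ t ≠ 0 ∧ φ₂ t ≠ 0) → a' = a ∧ b' = b

/-- `(a,b)` is a `u₁`-singular arc: a maximal open subinterval of `[0,T]` on which
`φ₁` vanishes identically and `φ₂` is nonvanishing. -/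
def IsU1SingularArc (T : ℝ) (φ₁ φ₂ : ℝ → ℝ) (a b : ℝ) : Prop :=
  0 ≤ a ∧ a < b ∧ b ≤ T ∧ (∀ t ∈ Ioo a b, φ₁ t = 0 ∧ φ₂ t ≠ 0) ∧
    ∀ a' b', 0 ≤ a' → a' ≤ a → b ≤ b' → b' ≤ T →
      (∀ t ∈ Ioo a' b', φ₁ t = 0 ∧ φ₂ t ≠ 0) → a' = a ∧ b' = b

/-- `(a,b)` is a `u₂`-singular arc. -/
def IsU2SingularArc (T : ℝ) (φ₁ φ₂ : ℝ → ℝ) (a b : ℝ) : Prop :=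
  0 ≤ a ∧ a < b ∧ b ≤ T ∧ (∀ t ∈ Ioo a b, φ₂ t = 0 ∧ φ₁ t ≠ 0) ∧
    ∀ a' b', 0 ≤ a' → a' ≤ a → b ≤ b' → b' ≤ T →
      (∀ t ∈ Ioo a' b', φ₂ t = 0 ∧ φ₁ t ≠ 0) → a' = a ∧ b' = b

/-- A singular arc is a `u₁`- or `u₂`-singular arc. -/
def IsSingularArc (T : ℝ) (φ₁ φ₂ : ℝ → ℝ) (a b : ℝ) : Prop :=
  IsU1SingularArc T φ₁ φ₂ a b ∨ IsU2SingularArc T φ₁ φ₂ a b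

/-- A switching time: a point of `(0,T)` separating two bang arcs. -/
def IsSwitchingTime (T : ℝ) (φ₁ φ₂ : ℝ → ℝ) (τ : ℝ) : Prop :=
  ∃ a b, IsBangArc T φ₁ φ₂ a τ ∧ IsBangArc T φ₁ φ₂ τ b

/-- The scalar control `ui` switches at the switching time `τ`: it is a.e. equal to
a constant of modulus 1 on a left neighborhood of `τ` and to the opposite constant
on a right neighborhood of `τ`. -/
def SwitchesAt (T : ℝ) (φ₁ φ₂ : ℝ → ℝ) (ui : ℝ → ℝ) (τ : ℝ) : Prop :=
  IsSwitchingTime T φ₁ φ₂ τ ∧ ∃ c : ℝ, |c| = 1 ∧ ∃ ε > 0,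
    (∀ᵐ t ∂volume, t ∈ Ioo (τ - ε) τ → ui t = c) ∧
    (∀ᵐ t ∂volume, t ∈ Ioo τ (τ + ε) → ui t = -c)

/-- The trajectory is bang-bang: `[0,T]` is the union of the closures of finitely
many bang arcs. -/
def IsBangBang (T : ℝ) (φ₁ φ₂ : ℝ → ℝ) : Prop :=
  ∃ (n : ℕ) (a b : Fin n → ℝ), (∀ i, IsBangArc T φ₁ φ₂ (a i) (b i)) ∧
    Icc (0:ℝ) T = ⋃ i, Icc (a i) (b i)

open Filter Topology
open scoped NNReal

lemma norm_smul_add_smul_le {E : Type*} [SeminormedAddCommGroup E] [NormedSpace ℝ E]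
    {a b : ℝ} (ha : |a| ≤ 1) (hb : |b| ≤ 1) (x y : E) : ‖a • x + b • y‖ ≤ ‖x‖ + ‖y‖ :=
  calc ‖a • x + b • y‖ ≤ |a| * ‖x‖ + |b| * ‖y‖ := by
        simpa only [norm_smul, Real.norm_eq_abs] using norm_add_le (a • x) (b • y)
    _ ≤ ‖x‖ + ‖y‖ :=
        add_le_add (mul_le_of_le_one_left (norm_nonneg x) ha)
          (mul_le_of_le_one_left (norm_nonneg y) hb)

lemma mul_eq_abs_of_add_eq_abs_add_abs {a b x y : ℝ} (ha : |a| ≤ 1) (hb : |b| ≤ 1)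
    (h : a * x + b * y = |x| + |y|) : a * x = |x| ∧ b * y = |y| := by
  have hx : a * x ≤ |x| := (le_abs_self _).trans (by
    rw [abs_mul]; exact mul_le_of_le_one_left (abs_nonneg x) ha)
  have hy : b * y ≤ |y| := (le_abs_self _).trans (by
    rw [abs_mul]; exact mul_le_of_le_one_left (abs_nonneg y) hb)
  constructor <;> linarith

lemma abs_eventuallyEq_const_mul {f : ℝ → ℝ} {c x : ℝ} (hf : ContinuousAt f x)
    (hc : c * f x = |f x|) (hx : f x ≠ 0) : (fun r => |f r|) =ᶠ[𝓝 x] fun r => c * f r := by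
  rcases hx.lt_or_gt with hneg | hpos
  · have hc' : c = -1 := mul_right_cancel₀ hx (by rw [hc, abs_of_neg hneg]; ring)
    filter_upwards [hf.eventually (Iio_mem_nhds hneg)] with r hr
    rw [hc', abs_of_neg hr]; ring
  · have hc' : c = 1 := mul_right_cancel₀ hx (by rw [hc, abs_of_pos hpos]; ring)
    filter_upwards [hf.eventually (Ioi_mem_nhds hpos)] with r hr
    rw [hc', abs_of_pos hr]; ring

lemma IsPreconnected.forall_pos_or_forall_neg {s : Set ℝ} {f : ℝ → ℝ} (hs : IsPreconnected s)
    (hf : ContinuousOn f s) (h0 : ∀ x ∈ s, f x ≠ 0) :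
    (∀ x ∈ s, 0 < f x) ∨ (∀ x ∈ s, f x < 0) := by
  by_contra! ⟨⟨x, hx, hfx⟩, ⟨y, hy, hfy⟩⟩
  obtain ⟨z, hz, hfz⟩ := hs.intermediate_value hx hy hf ⟨hfx, hfy⟩
  exact h0 z hz hfz

lemma intervalIntegral_ne_zero_of_ne_zero {f : ℝ → ℝ} {a b : ℝ} (hab : a < b)
    (hf : ContinuousOn f (Icc a b)) (h0 : ∀ x ∈ Icc a b, f x ≠ 0) : ∫ x in a..b, f x ≠ 0 := by
  have hint : IntervalIntegrable f volume a b := hf.intervalIntegrable_of_Icc hab.le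
  rcases isPreconnected_Icc.forall_pos_or_forall_neg hf h0 with hpos | hneg
  · exact (intervalIntegral.intervalIntegral_pos_of_pos_on hint
      (fun x hx => hpos x (Ioo_subset_Icc_self hx)) hab).ne'
  · have := intervalIntegral.intervalIntegral_pos_of_pos_on hint.neg
      (fun x hx => neg_pos.2 (hneg x (Ioo_subset_Icc_self hx))) hab
    simp only [Pi.neg_apply, intervalIntegral.integral_neg, neg_pos] at this
    exact this.ne

lemma ae_mem_Ioo_of_mem_Icc (a b : ℝ) : ∀ᵐ t, t ∈ Icc a b → t ∈ Ioo a b :=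
  (Ioo_ae_eq_Icc (μ := volume)).symm.le

lemma LipschitzOnWith.sub_eq_integral_of_ae_hasDerivAt {f g : ℝ → ℝ} {K : ℝ≥0} {a b : ℝ}
    (hab : a ≤ b) (hf : LipschitzOnWith K f (Icc a b))
    (hd : ∀ᵐ x, x ∈ Ioo a b → HasDerivAt f (g x) x) : f b - f a = ∫ x in a..b, g x := by
  rw [← uIcc_of_le hab] at hf
  rw [← hf.absolutelyContinuousOnInterval.integral_deriv_eq_sub]
  refine intervalIntegral.integral_congr_ae ?_
  filter_upwards [hd, ae_mem_Ioo_of_mem_Icc a b] with x hdx hx hxI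
  rw [uIoc_of_le hab] at hxI
  exact (hdx (hx (Ioc_subset_Icc_self hxI))).deriv

lemma isDiscrete_of_eventually_eq {X : Type*} [TopologicalSpace X] {s u : Set X} (hsu : s ⊆ u)
    (h : ∀ x ∈ s, ∀ᶠ y in 𝓝[u] x, y ∈ s → y = x) : IsDiscrete s := by
  refine IsDiscrete.of_nhdsWithin fun x hx => le_pure_iff.2 ?_
  filter_upwards [nhdsWithin_mono x hsu (h x hx), self_mem_nhdsWithin] with y hy hys
  exact hy hys

lemma exists_iUnion_Icc_eq_of_finite {P : Set ℝ} (hP : P.Finite) {a b : ℝ} (hab : a < b)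
    (ha : a ∈ P) (hb : b ∈ P) (hPab : P ⊆ Icc a b) :
    ∃ (n : ℕ) (l r : Fin n → ℝ),
      (∀ i, l i ∈ P ∧ r i ∈ P ∧ l i < r i ∧ ∀ t ∈ Ioo (l i) (r i), t ∉ P) ∧
        Icc a b = ⋃ i, Icc (l i) (r i) := by
  have hnext : ∀ p ∈ P, p < b → ∃ r ∈ P, p < r ∧ ∀ z ∈ P, p < z → r ≤ z := by
    intro p hp hpb
    obtain ⟨r, ⟨hrP, hpr⟩, hmin⟩ :=
      exists_min_image {z ∈ P | p < z} id (hP.subset (sep_subset _ _)) ⟨b, hb, hpb⟩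
    exact ⟨r, hrP, hpr, fun z hz hpz => hmin z ⟨hz, hpz⟩⟩
  choose! next hnextP hlt hmin using hnext
  obtain ⟨n, e, he⟩ := (hP.subset (sep_subset P (· < b))).fin_embedding
  have hmem : ∀ i, e i ∈ P ∧ e i < b := fun i => by
    have := mem_range_self (f := e) i
    rwa [he] at this
  refine ⟨n, e, fun i => next (e i), fun i => ?_, ?_⟩
  · obtain ⟨hiP, hib⟩ := hmem i
    exact ⟨hiP, hnextP _ hiP hib, hlt _ hiP hib,
      fun t ht htP => (hmin _ hiP hib t htP ht.1).not_gt ht.2⟩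
  refine (Subset.antisymm (fun x hx => ?_) (iUnion_subset fun i => ?_))
  · obtain ⟨p, ⟨hpP, hpb, hpx⟩, hmax⟩ := exists_max_image {z ∈ P | z < b ∧ z ≤ x} id
      (hP.subset (sep_subset _ _)) ⟨a, ha, hab, hx.1⟩
    obtain ⟨i, rfl⟩ : p ∈ range e := by rw [he]; exact ⟨hpP, hpb⟩
    refine mem_iUnion.2 ⟨i, hpx, not_lt.1 fun hxr => ?_⟩
    have hrb : next (e i) < b := hxr.trans_le hx.2
    have := hmax _ ⟨hnextP _ hpP hpb, hrb, hxr.le⟩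
    exact (hlt _ hpP hpb).not_ge this
  · exact Icc_subset_Icc (hPab (hmem i).1).1 (hPab (hnextP _ (hmem i).1 (hmem i).2)).2

lemma isBangArc_of_forall_ne_zero {T a b : ℝ} {φ₁ φ₂ : ℝ → ℝ} (ha : 0 ≤ a) (hab : a < b)
    (hb : b ≤ T) (ha' : 0 < a → φ₁ a = 0 ∨ φ₂ a = 0) (hb' : b < T → φ₁ b = 0 ∨ φ₂ b = 0)
    (hne : ∀ t ∈ Ioo a b, φ₁ t ≠ 0 ∧ φ₂ t ≠ 0) : IsBangArc T φ₁ φ₂ a b := by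
  refine ⟨ha, hab, hb, hne, fun a' b' ha'0 ha'a hbb' hb'T h => ⟨?_, ?_⟩⟩
  · by_contra hne'
    have hlt : a' < a := lt_of_le_of_ne ha'a hne'
    have := h a ⟨hlt, hab.trans_le hbb'⟩
    rcases ha' (ha'0.trans_lt hlt) with h₁ | h₂
    exacts [this.1 h₁, this.2 h₂]
  · by_contra hne'
    have hlt : b < b' := lt_of_le_of_ne hbb' (Ne.symm hne')
    have := h b ⟨ha'a.trans_lt hab, hlt⟩
    rcases hb' (hlt.trans_le hb'T) with h₁ | h₂
    exacts [this.1 h₁, this.2 h₂]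

theorem isBangBang_of_finite {T : ℝ} {φ₁ φ₂ : ℝ → ℝ} (hT : 0 < T)
    (hZ : {t ∈ Icc 0 T | φ₁ t = 0 ∨ φ₂ t = 0}.Finite) : IsBangBang T φ₁ φ₂ := by
  set P := insert 0 (insert T {t ∈ Icc 0 T | φ₁ t = 0 ∨ φ₂ t = 0})
  have hPsub : P ⊆ Icc 0 T := insert_subset (left_mem_Icc.2 hT.le)
    (insert_subset (right_mem_Icc.2 hT.le) (sep_subset _ _))
  have hzero : ∀ t ∈ P, 0 < t → t < T → φ₁ t = 0 ∨ φ₂ t = 0 := by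
    rintro t (rfl | rfl | ⟨-, ht⟩) h0 htT
    exacts [(lt_irrefl _ h0).elim, (lt_irrefl _ htT).elim, ht]
  obtain ⟨n, l, r, hlr, hcover⟩ := exists_iUnion_Icc_eq_of_finite ((hZ.insert T).insert 0) hT
    (mem_insert 0 _) (mem_insert_of_mem 0 (mem_insert T _)) hPsub
  refine ⟨n, l, r, fun i => ?_, hcover⟩
  obtain ⟨hl, hr, hlt, hgap⟩ := hlr i
  refine isBangArc_of_forall_ne_zero (hPsub hl).1 hlt (hPsub hr).2
    (fun h0 => hzero _ hl h0 (hlt.trans_le (hPsub hr).2))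
    (fun hT' => hzero _ hr ((hPsub hl).1.trans_lt hlt) hT') fun t ht => not_or.1 fun hzero => ?_
  have htI : t ∈ Icc 0 T := ⟨(hPsub hl).1.trans ht.1.le, ht.2.le.trans (hPsub hr).2⟩
  exact hgap t ht (mem_insert_of_mem 0 (mem_insert_of_mem T ⟨htI, hzero⟩))

lemma hasDerivAt_abs_add_abs_of_ne_zero {φ₁ φ₂ : ℝ → ℝ} {c₁ c₂ d t : ℝ}
    (hφ₁ : HasDerivAt φ₁ (c₂ * -d) t) (hφ₂ : HasDerivAt φ₂ (c₁ * d) t)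
    (h₁ : c₁ * φ₁ t = |φ₁ t|) (h₂ : c₂ * φ₂ t = |φ₂ t|) (h₁0 : φ₁ t ≠ 0) (h₂0 : φ₂ t ≠ 0) :
    HasDerivAt (fun r => |φ₁ r| + |φ₂ r|) 0 t := by
  have hev := (abs_eventuallyEq_const_mul hφ₁.continuousAt h₁ h₁0).add
    (abs_eventuallyEq_const_mul hφ₂.continuousAt h₂ h₂0)
  refine (((hφ₁.const_mul c₁).add (hφ₂.const_mul c₂)).congr_of_eventuallyEq hev).congr_deriv ?_
  ring

/-- Switching functions `φ₁ φ₂`, bracket function `φ₁₂` and controls `u₁ u₂` of an extremal on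
`[0,T]`, with the properties given by the maximum principle. -/
structure SwitchingFunctions (T : ℝ) (φ₁ φ₂ φ₁₂ u₁ u₂ : ℝ → ℝ) : Prop where
  lipschitzOnWith₁ : ∃ K, LipschitzOnWith K φ₁ (Icc 0 T)
  lipschitzOnWith₂ : ∃ K, LipschitzOnWith K φ₂ (Icc 0 T)
  continuousOn_bracket : ContinuousOn φ₁₂ (Icc 0 T)
  bracket_ne_zero : ∀ t ∈ Icc 0 T, φ₁₂ t ≠ 0
  hasDerivAt₁ : ∀ᵐ t, t ∈ Ioo 0 T → HasDerivAt φ₁ (u₂ t * -φ₁₂ t) t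
  hasDerivAt₂ : ∀ᵐ t, t ∈ Ioo 0 T → HasDerivAt φ₂ (u₁ t * φ₁₂ t) t
  mul_eq_abs₁ : ∀ᵐ t, t ∈ Ioo 0 T → u₁ t * φ₁ t = |φ₁ t|
  mul_eq_abs₂ : ∀ᵐ t, t ∈ Ioo 0 T → u₂ t * φ₂ t = |φ₂ t|

namespace SwitchingFunctions

variable {T : ℝ} {φ₁ φ₂ φ₁₂ u₁ u₂ : ℝ → ℝ}

lemma swap (h : SwitchingFunctions T φ₁ φ₂ φ₁₂ u₁ u₂) :
    SwitchingFunctions T φ₂ φ₁ (-φ₁₂) u₂ u₁ where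
  lipschitzOnWith₁ := h.lipschitzOnWith₂
  lipschitzOnWith₂ := h.lipschitzOnWith₁
  continuousOn_bracket := h.continuousOn_bracket.neg
  bracket_ne_zero t ht := neg_ne_zero.2 (h.bracket_ne_zero t ht)
  hasDerivAt₁ := by simpa only [Pi.neg_apply, neg_neg] using h.hasDerivAt₂
  hasDerivAt₂ := h.hasDerivAt₁
  mul_eq_abs₁ := h.mul_eq_abs₂
  mul_eq_abs₂ := h.mul_eq_abs₁

lemma continuousOn₂ (h : SwitchingFunctions T φ₁ φ₂ φ₁₂ u₁ u₂) : ContinuousOn φ₂ (Icc 0 T) :=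
  h.lipschitzOnWith₂.choose_spec.continuousOn

/-- Where `φ₂ ≠ 0` the control `u₂ = sign φ₂` is constant, so `φ₁' = -u₂ φ₁₂` has a fixed
sign. -/
lemma injOn (h : SwitchingFunctions T φ₁ φ₂ φ₁₂ u₁ u₂) {a b : ℝ} (hab : Icc a b ⊆ Icc 0 T)
    (hφ₂ : ∀ t ∈ Icc a b, φ₂ t ≠ 0) : InjOn φ₁ (Icc a b) := by
  intro s hs t ht hst
  by_contra hne
  wlog hlt : s < t generalizing s t
  · exact this ht hs hst.symm (Ne.symm hne) (lt_of_le_of_ne (not_lt.1 hlt) (Ne.symm hne))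
  have hsub : Icc s t ⊆ Icc 0 T := (Icc_subset_Icc hs.1 ht.2).trans hab
  have hφ₂' : ∀ r ∈ Icc s t, φ₂ r ≠ 0 := fun r hr => hφ₂ r (Icc_subset_Icc hs.1 ht.2 hr)
  obtain ⟨c, hc0, hc⟩ : ∃ c : ℝ, c ≠ 0 ∧ ∀ r ∈ Icc s t, |φ₂ r| = c * φ₂ r := by
    rcases isPreconnected_Icc.forall_pos_or_forall_neg (h.continuousOn₂.mono hsub) hφ₂'
      with hpos | hneg
    · exact ⟨1, one_ne_zero, fun r hr => by rw [one_mul, abs_of_pos (hpos r hr)]⟩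
    · exact ⟨-1, by norm_num, fun r hr => by rw [neg_one_mul, abs_of_neg (hneg r hr)]⟩
  have hderiv : ∀ᵐ r, r ∈ Ioo s t → HasDerivAt φ₁ (c * -φ₁₂ r) r := by
    filter_upwards [h.hasDerivAt₁, h.mul_eq_abs₂] with r hd hm hr
    have hr0 : r ∈ Ioo 0 T := ⟨(hsub (left_mem_Icc.2 hlt.le)).1.trans_lt hr.1,
      hr.2.trans_le (hsub (right_mem_Icc.2 hlt.le)).2⟩
    have hu : u₂ r = c := mul_right_cancel₀ (hφ₂' r (Ioo_subset_Icc_self hr))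
      ((hm hr0).trans (hc r (Ioo_subset_Icc_self hr)))
    simpa only [hu] using hd hr0
  obtain ⟨K, hK⟩ := h.lipschitzOnWith₁
  have hint := (hK.mono hsub).sub_eq_integral_of_ae_hasDerivAt hlt.le hderiv
  rw [intervalIntegral.integral_const_mul, hst, sub_self, eq_comm, mul_eq_zero] at hint
  refine intervalIntegral_ne_zero_of_ne_zero hlt (h.continuousOn_bracket.mono hsub).neg
    (fun r hr => neg_ne_zero.2 (h.bracket_ne_zero r (hsub hr))) (hint.resolve_left hc0)

lemma eventually_eq_of_zero (h : SwitchingFunctions T φ₁ φ₂ φ₁₂ u₁ u₂) {x : ℝ}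
    (hx : x ∈ Icc 0 T) (h₁ : φ₁ x = 0) (h₂ : φ₂ x ≠ 0) :
    ∀ᶠ t in 𝓝[Icc 0 T] x, (φ₁ t = 0 ∨ φ₂ t = 0) → t = x := by
  have hbasis := nhdsWithin_hasBasis (nhds_basis_Icc_pos x) (Icc 0 T)
  obtain ⟨δ, hδ, hne⟩ :=
    hbasis.eventually_iff.1 (Tendsto.eventually_ne (h.continuousOn₂ x hx) h₂)
  have hinj : InjOn φ₁ (Icc (x - δ) (x + δ) ∩ Icc 0 T) := by
    rw [Icc_inter_Icc] at hne ⊢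
    exact h.injOn (Icc_subset_Icc (le_max_right _ _) (min_le_right _ _)) hne
  filter_upwards [hbasis.mem_of_mem hδ] with t ht hzero
  refine hinj ht ⟨⟨by linarith, by linarith⟩, hx⟩ ?_
  rw [h₁]
  exact hzero.resolve_right (hne ht)

lemma countable_setOf_eq_zero_and_ne_zero (h : SwitchingFunctions T φ₁ φ₂ φ₁₂ u₁ u₂) :
    {t ∈ Icc 0 T | φ₁ t = 0 ∧ φ₂ t ≠ 0}.Countable := by
  refine (HereditarilyLindelofSpace.isLindelof _).countable_of_isDiscrete
    (isDiscrete_of_eventually_eq (sep_subset _ _) fun x hx => ?_)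
  filter_upwards [h.eventually_eq_of_zero hx.1 hx.2.1 hx.2.2] with t ht hts
  exact ht (Or.inl hts.2.1)

/-- `|φ₁| + |φ₂|` is the maximized Hamiltonian. Off the countable set where exactly one switching
function vanishes, its derivative is `u₁ u₂ (-φ₁₂) + u₂ u₁ φ₁₂ = 0` where both are nonzero, and
`0` at common zeros, which are minima. -/
lemma abs_add_abs_eq (h : SwitchingFunctions T φ₁ φ₂ φ₁₂ u₁ u₂) (hT : 0 ≤ T) :
    ∀ t ∈ Icc 0 T, |φ₁ t| + |φ₂ t| = |φ₁ 0| + |φ₂ 0| := by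
  obtain ⟨K₁, hK₁⟩ := h.lipschitzOnWith₁
  obtain ⟨K₂, hK₂⟩ := h.lipschitzOnWith₂
  have hlip : LipschitzOnWith (1 * K₁ + 1 * K₂) (fun t => |φ₁ t| + |φ₂ t|) (Icc 0 T) :=
    (lipschitzWith_one_norm.comp_lipschitzOnWith hK₁).add
      (lipschitzWith_one_norm.comp_lipschitzOnWith hK₂)
  rw [← uIcc_of_le hT] at hlip ⊢
  have hac := hlip.absolutelyContinuousOnInterval
  have hS₁ := h.countable_setOf_eq_zero_and_ne_zero.measure_zero volume
  have hS₂ := h.swap.countable_setOf_eq_zero_and_ne_zero.measure_zero volume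
  rw [measure_eq_zero_iff_ae_notMem] at hS₁ hS₂
  obtain ⟨C, hC⟩ := hac.const_of_ae_hasDerivAt_zero (by
    filter_upwards [hac.ae_differentiableAt, h.hasDerivAt₁, h.hasDerivAt₂, h.mul_eq_abs₁,
      h.mul_eq_abs₂, hS₁, hS₂, ae_mem_Ioo_of_mem_Icc 0 T]
      with t hdiff hd₁ hd₂ hm₁ hm₂ hn₁ hn₂ hIoo ht
    have ht' : t ∈ Ioo 0 T := hIoo (by rwa [← uIcc_of_le hT])
    by_cases h₁ : φ₁ t = 0 <;> by_cases h₂ : φ₂ t = 0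
    · have hmin : IsLocalMin (fun r => |φ₁ r| + |φ₂ r|) t :=
        Eventually.of_forall fun r => by simp only [h₁, h₂, abs_zero, add_zero]; positivity
      simpa only [hmin.deriv_eq_zero] using (hdiff ht).hasDerivAt
    · exact absurd ⟨Ioo_subset_Icc_self ht', h₁, h₂⟩ hn₁
    · exact absurd ⟨Ioo_subset_Icc_self ht', h₂, h₁⟩ hn₂
    · exact hasDerivAt_abs_add_abs_of_ne_zero (hd₁ ht') (hd₂ ht') (hm₁ ht') (hm₂ ht') h₁ h₂)
  intro t ht
  rw [hC t ht, hC 0 left_mem_uIcc]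

lemma ae_eq_zero_of_eq_zero (h : SwitchingFunctions T φ₁ φ₂ φ₁₂ u₁ u₂)
    (hφ₁ : ∀ t ∈ Icc 0 T, φ₁ t = 0) : ∀ᵐ t, t ∈ Ioo 0 T → u₂ t = 0 := by
  filter_upwards [h.hasDerivAt₁] with t hd ht
  have h0 : HasDerivAt φ₁ 0 t := (hasDerivAt_const t (0 : ℝ)).congr_of_eventuallyEq
    (eventually_of_mem (Icc_mem_nhds ht.1 ht.2) hφ₁)
  exact (mul_eq_zero.1 ((hd ht).unique h0)).resolve_right
    (neg_ne_zero.2 (h.bracket_ne_zero t (Ioo_subset_Icc_self ht)))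

lemma ae_eq_zero_of_abs_add_abs_eq_zero (h : SwitchingFunctions T φ₁ φ₂ φ₁₂ u₁ u₂)
    (hT : 0 ≤ T) (hH : |φ₁ 0| + |φ₂ 0| = 0) : ∀ᵐ t, t ∈ Ioo 0 T → u₁ t = 0 ∧ u₂ t = 0 := by
  have hφ : ∀ t ∈ Icc 0 T, φ₁ t = 0 ∧ φ₂ t = 0 := fun t ht => by
    have := h.abs_add_abs_eq hT t ht
    constructor <;> apply abs_eq_zero.1 <;> linarith [abs_nonneg (φ₁ t), abs_nonneg (φ₂ t)]
  filter_upwards [h.swap.ae_eq_zero_of_eq_zero fun t ht => (hφ t ht).2,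
    h.ae_eq_zero_of_eq_zero fun t ht => (hφ t ht).1] with t h₁ h₂ ht
  exact ⟨h₁ ht, h₂ ht⟩

lemma finite_setOf_eq_zero (h : SwitchingFunctions T φ₁ φ₂ φ₁₂ u₁ u₂) (hT : 0 ≤ T)
    (hH : |φ₁ 0| + |φ₂ 0| ≠ 0) : {t ∈ Icc 0 T | φ₁ t = 0 ∨ φ₂ t = 0}.Finite := by
  have hclosed : IsClosed {t ∈ Icc 0 T | φ₁ t = 0 ∨ φ₂ t = 0} := by
    rw [sep_or]
    exact (h.swap.continuousOn₂.preimage_isClosed_of_isClosed isClosed_Icc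
      isClosed_singleton).union
      (h.continuousOn₂.preimage_isClosed_of_isClosed isClosed_Icc isClosed_singleton)
  refine (isCompact_Icc.of_isClosed_subset hclosed (sep_subset _ _)).finite
    (isDiscrete_of_eventually_eq (sep_subset _ _) fun x hx => ?_)
  have hx' : ¬(φ₁ x = 0 ∧ φ₂ x = 0) := fun ⟨h₁, h₂⟩ =>
    hH (by rw [← h.abs_add_abs_eq hT x hx.1, h₁, h₂, abs_zero, add_zero])
  rcases hx.2 with h₁ | h₂
  · filter_upwards [h.eventually_eq_of_zero hx.1 h₁ fun h₂ => hx' ⟨h₁, h₂⟩] with t ht hts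
    exact ht hts.2
  · filter_upwards [h.swap.eventually_eq_of_zero hx.1 h₂ fun h₁ => hx' ⟨h₁, h₂⟩] with t ht hts
    exact ht hts.2.symm

theorem isBangBang (h : SwitchingFunctions T φ₁ φ₂ φ₁₂ u₁ u₂) (hT : 0 < T)
    (hH : |φ₁ 0| + |φ₂ 0| ≠ 0) : IsBangBang T φ₁ φ₂ :=
  isBangBang_of_finite hT (h.finite_setOf_eq_zero hT.le hH)

end SwitchingFunctions

section Primitive

variable {E : Type*} [NormedAddCommGroup E] [NormedSpace ℝ E] {T : ℝ} {x f : ℝ → E}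

lemma eq_add_intervalIntegral_of_eq_add_integral
    (hx : ∀ t ∈ Icc (0:ℝ) T, x t = x 0 + ∫ s in Icc (0:ℝ) t, f s) :
    ∀ t ∈ Icc (0:ℝ) T, x t = x 0 + ∫ s in (0:ℝ)..t, f s := by
  intro t ht
  rw [hx t ht, intervalIntegral.integral_of_le ht.1, integral_Icc_eq_integral_Ioc]

lemma continuousOn_of_eq_add_integral (hT : 0 ≤ T) (hf : IntegrableOn f (Icc 0 T))
    (hx : ∀ t ∈ Icc (0:ℝ) T, x t = x 0 + ∫ s in Icc (0:ℝ) t, f s) :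
    ContinuousOn x (Icc 0 T) := by
  rw [← uIcc_of_le hT] at hf
  have hprim :=
    (continuousOn_const (c := x 0)).add (intervalIntegral.continuousOn_primitive_interval hf)
  rw [uIcc_of_le hT] at hprim
  exact hprim.congr (eq_add_intervalIntegral_of_eq_add_integral hx)

lemma ae_hasDerivAt_of_eq_add_integral [CompleteSpace E] (hT : 0 ≤ T)
    (hf : IntegrableOn f (Icc 0 T)) (hx : ∀ t ∈ Icc (0:ℝ) T, x t = x 0 + ∫ s in Icc (0:ℝ) t, f s) :
    ∀ᵐ t, t ∈ Ioo 0 T → HasDerivAt x (f t) t := by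
  have hfi : IntervalIntegrable f volume 0 T :=
    (intervalIntegrable_iff_integrableOn_Icc_of_le hT).2 hf
  filter_upwards [hfi.ae_hasDerivAt_integral] with t ht htT
  have hmem : t ∈ uIcc 0 T := by rw [uIcc_of_le hT]; exact Ioo_subset_Icc_self htT
  refine ((ht hmem 0 left_mem_uIcc).const_add (x 0)).congr_of_eventuallyEq ?_
  filter_upwards [Icc_mem_nhds htT.1 htT.2] with r hr
  exact eq_add_intervalIntegral_of_eq_add_integral hx r hr

lemma exists_lipschitzOnWith_of_eq_add_integral {g : ℝ → ℝ} (hg : ContinuousOn g (Icc 0 T))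
    (hfg : ∀ t ∈ Icc 0 T, ‖f t‖ ≤ g t) (hf : IntegrableOn f (Icc 0 T))
    (hx : ∀ t ∈ Icc (0:ℝ) T, x t = x 0 + ∫ s in Icc (0:ℝ) t, f s) :
    ∃ K, LipschitzOnWith K x (Icc 0 T) := by
  obtain ⟨C, hC⟩ := isCompact_Icc.exists_bound_of_continuousOn hg
  have hfC : ∀ t ∈ Icc 0 T, ‖f t‖ ≤ C := fun t ht =>
    (hfg t ht).trans ((le_abs_self _).trans (hC t ht))
  refine ⟨C.toNNReal, LipschitzOnWith.of_dist_le_mul fun t ht s hs => ?_⟩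
  have hfi : ∀ r ∈ Icc 0 T, IntervalIntegrable f volume 0 r := fun r hr =>
    (intervalIntegrable_iff_integrableOn_Icc_of_le hr.1).2
      (hf.mono_set (Icc_subset_Icc le_rfl hr.2))
  rw [dist_eq_norm, eq_add_intervalIntegral_of_eq_add_integral hx t ht,
    eq_add_intervalIntegral_of_eq_add_integral hx s hs, add_sub_add_left_eq_sub,
    intervalIntegral.integral_interval_sub_left (hfi t ht) (hfi s hs), Real.dist_eq]
  refine (intervalIntegral.norm_integral_le_of_norm_le_const fun r hr =>
    hfC r (uIcc_subset_Icc hs ht (uIoc_subset_uIcc hr))).trans ?_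
  gcongr
  exact Real.le_coe_toNNReal C

end Primitive

lemma ContDiff.exists_lipschitzOnWith_comp {E F : Type*} [NormedAddCommGroup E] [NormedSpace ℝ E]
    [ProperSpace E] [NormedAddCommGroup F] [NormedSpace ℝ F] {Φ : E → F} (hΦ : ContDiff ℝ 1 Φ)
    {z : ℝ → E} {s : Set ℝ} {K : ℝ≥0} (hz : LipschitzOnWith K z s) (hs : IsCompact s) :
    ∃ K', LipschitzOnWith K' (Φ ∘ z) s := by
  obtain ⟨R, hR⟩ := (hs.image_of_continuousOn hz.continuousOn).isBounded.subset_closedBall 0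
  obtain ⟨L, hL⟩ := hΦ.contDiffOn.exists_lipschitzOnWith one_ne_zero (convex_closedBall 0 R)
    (isCompact_closedBall 0 R)
  exact ⟨L * K, hL.comp hz fun t ht => hR (mem_image_of_mem z ht)⟩

lemma exists_lipschitzOnWith_phiF {X : E3 → E3} (hX : ContDiff ℝ 1 X) {q lam : ℝ → E3}
    {s : Set ℝ} {K₁ K₂ : ℝ≥0} (hq : LipschitzOnWith K₁ q s) (hlam : LipschitzOnWith K₂ lam s)
    (hs : IsCompact s) : ∃ K, LipschitzOnWith K (phiF X q lam) s := by
  obtain ⟨K, hK⟩ := (contDiff_snd.inner ℝ (hX.comp contDiff_fst)).exists_lipschitzOnWith_comp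
    (hq.prodMk hlam) hs
  exact ⟨K, hK⟩

lemma hasDerivAt_phiF {X : E3 → E3} {q lam : ℝ → E3} {t : ℝ} {v : E3} {A : E3 →L[ℝ] E3}
    (hX : DifferentiableAt ℝ X (q t)) (hq : HasDerivAt q v t)
    (hlam : HasDerivAt lam (-(ContinuousLinearMap.adjoint A (lam t))) t) :
    HasDerivAt (phiF X q lam) ⟪lam t, fderiv ℝ X (q t) v - A (X (q t))⟫ t := by
  refine (hlam.inner ℝ (hX.hasFDerivAt.comp_hasDerivAt t hq)).congr_deriv ?_
  rw [inner_sub_right, inner_neg_left, ContinuousLinearMap.adjoint_inner_left,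
    Function.comp_apply]
  ring

lemma continuous_lieBracketVF {E : Type*} [NormedAddCommGroup E] [NormedSpace ℝ E] {X Y : E → E}
    (hX : ContDiff ℝ 1 X) (hY : ContDiff ℝ 1 Y) : Continuous (lieBracketVF X Y) :=
  ((hY.continuous_fderiv one_ne_zero).clm_apply hX.continuous).sub
    ((hX.continuous_fderiv one_ne_zero).clm_apply hY.continuous)

section Extremal

variable {X₁ X₂ : E3 → E3} {T : ℝ} {q lam : ℝ → E3} {u : ℝ → ℝ × ℝ}

namespace IsAdmissiblePair

lemma continuousOn (hadm : IsAdmissiblePair X₁ X₂ T q u) : ContinuousOn q (Icc 0 T) := by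
  obtain ⟨hT, -, -, hv, hq⟩ := hadm
  exact continuousOn_of_eq_add_integral hT hv hq

lemma ae_hasDerivAt (hadm : IsAdmissiblePair X₁ X₂ T q u) :
    ∀ᵐ t, t ∈ Ioo 0 T → HasDerivAt q ((u t).1 • X₁ (q t) + (u t).2 • X₂ (q t)) t := by
  obtain ⟨hT, -, -, hv, hq⟩ := hadm
  exact ae_hasDerivAt_of_eq_add_integral hT hv hq

lemma exists_lipschitzOnWith (hX₁ : Continuous X₁) (hX₂ : Continuous X₂)
    (hadm : IsAdmissiblePair X₁ X₂ T q u) : ∃ K, LipschitzOnWith K q (Icc 0 T) := by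
  have hc := hadm.continuousOn
  obtain ⟨-, -, hu, hv, hq⟩ := hadm
  exact exists_lipschitzOnWith_of_eq_add_integral
    ((hX₁.comp_continuousOn hc).norm.add (hX₂.comp_continuousOn hc).norm)
    (fun t ht => norm_smul_add_smul_le (hu t ht).1 (hu t ht).2 _ _) hv hq

lemma apply_eq_of_ae_eq_zero (hadm : IsAdmissiblePair X₁ X₂ T q u)
    (hu : ∀ᵐ t, t ∈ Ioo 0 T → (u t).1 = 0 ∧ (u t).2 = 0) : q T = q 0 := by
  obtain ⟨hT, -, -, -, hq⟩ := hadm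
  rw [hq T (right_mem_Icc.2 hT), setIntegral_eq_zero_of_ae_eq_zero, add_zero]
  filter_upwards [hu, ae_mem_Ioo_of_mem_Icc 0 T] with t hut hIoo ht
  obtain ⟨h₁, h₂⟩ := hut (hIoo ht)
  simp [h₁, h₂]

end IsAdmissiblePair

lemma IsTimeOptimal.apply_ne (hopt : IsTimeOptimal X₁ X₂ T q) (hT : 0 < T) : q T ≠ q 0 :=
  fun h => hopt ⟨0, fun _ => q 0, fun _ => 0, hT,
    ⟨le_rfl, measurable_const, fun _ _ => by simp, by simp, fun _ _ => by simp⟩, rfl, h.symm⟩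

namespace IsExtremalLift

lemma continuousOn (hT : 0 ≤ T) (hlift : IsExtremalLift X₁ X₂ T q u lam) :
    ContinuousOn lam (Icc 0 T) :=
  continuousOn_of_eq_add_integral hT hlift.2.1 hlift.2.2.1

lemma ae_hasDerivAt (hT : 0 ≤ T) (hlift : IsExtremalLift X₁ X₂ T q u lam) :
    ∀ᵐ t, t ∈ Ioo 0 T → HasDerivAt lam (adjVec X₁ X₂ u q lam t) t :=
  ae_hasDerivAt_of_eq_add_integral hT hlift.2.1 hlift.2.2.1

lemma exists_lipschitzOnWith (hX₁ : ContDiff ℝ 1 X₁) (hX₂ : ContDiff ℝ 1 X₂)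
    (hadm : IsAdmissiblePair X₁ X₂ T q u) (hlift : IsExtremalLift X₁ X₂ T q u lam) :
    ∃ K, LipschitzOnWith K lam (Icc 0 T) := by
  have hD : ∀ {X : E3 → E3}, ContDiff ℝ 1 X →
      ContinuousOn (fun t => ‖fderiv ℝ X (q t)‖) (Icc 0 T) :=
    fun hX => ((hX.continuous_fderiv one_ne_zero).comp_continuousOn hadm.continuousOn).norm
  refine exists_lipschitzOnWith_of_eq_add_integral (((hD hX₁).add (hD hX₂)).mul
    (hlift.continuousOn hadm.1).norm) (fun t ht => ?_) hlift.2.1 hlift.2.2.1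
  rw [adjVec, norm_neg]
  refine (ContinuousLinearMap.le_opNorm _ _).trans ?_
  rw [LinearIsometryEquiv.norm_map]
  exact mul_le_mul_of_nonneg_right
    (norm_smul_add_smul_le (hadm.2.2.1 t ht).1 (hadm.2.2.1 t ht).2 _ _) (norm_nonneg _)

lemma ae_mul_eq_abs (hadm : IsAdmissiblePair X₁ X₂ T q u)
    (hlift : IsExtremalLift X₁ X₂ T q u lam) :
    ∀ᵐ t, t ∈ Ioo 0 T → (u t).1 * phiF X₁ q lam t = |phiF X₁ q lam t| ∧
      (u t).2 * phiF X₂ q lam t = |phiF X₂ q lam t| := by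
  filter_upwards [hlift.2.2.2] with t hmax ht
  exact mul_eq_abs_of_add_eq_abs_add_abs (hadm.2.2.1 t (Ioo_subset_Icc_self ht)).1
    (hadm.2.2.1 t (Ioo_subset_Icc_self ht)).2 (hmax (Ioo_subset_Icc_self ht))

lemma ae_hasDerivAt_phiF (hX₁ : Differentiable ℝ X₁) (hX₂ : Differentiable ℝ X₂)
    (hadm : IsAdmissiblePair X₁ X₂ T q u) (hlift : IsExtremalLift X₁ X₂ T q u lam) :
    ∀ᵐ t, t ∈ Ioo 0 T →
      HasDerivAt (phiF X₁ q lam) ((u t).2 * -phiF (X12 X₁ X₂) q lam t) t ∧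
      HasDerivAt (phiF X₂ q lam) ((u t).1 * phiF (X12 X₁ X₂) q lam t) t := by
  filter_upwards [hadm.ae_hasDerivAt, hlift.ae_hasDerivAt hadm.1] with t hq hlam ht
  -- `DX₁ (u₁X₁ + u₂X₂) - (u₁DX₁ + u₂DX₂) X₁ = -u₂ [X₁, X₂]`, and symmetrically for `X₂`.
  refine ⟨(hasDerivAt_phiF (hX₁ (q t)) (hq ht) (hlam ht)).congr_deriv ?_,
    (hasDerivAt_phiF (hX₂ (q t)) (hq ht) (hlam ht)).congr_deriv ?_⟩ <;>
  · simp only [phiF, X12, lieBracketVF, map_add, map_smul, add_apply,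
      FunLike.coe_smul, Pi.smul_apply, inner_add_right, inner_sub_right,
      real_inner_smul_right]
    ring

theorem switchingFunctions (hX₁ : ContDiff ℝ 1 X₁) (hX₂ : ContDiff ℝ 1 X₂)
    (hadm : IsAdmissiblePair X₁ X₂ T q u) (hlift : IsExtremalLift X₁ X₂ T q u lam)
    (hbr : ∀ t ∈ Icc (0:ℝ) T, phiF (X12 X₁ X₂) q lam t ≠ 0) :
    SwitchingFunctions T (phiF X₁ q lam) (phiF X₂ q lam) (phiF (X12 X₁ X₂) q lam)
      (fun t => (u t).1) (fun t => (u t).2) := by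
  obtain ⟨K, hq⟩ := hadm.exists_lipschitzOnWith hX₁.continuous hX₂.continuous
  obtain ⟨L, hlam⟩ := hlift.exists_lipschitzOnWith hX₁ hX₂ hadm
  have hderiv := hlift.ae_hasDerivAt_phiF (hX₁.differentiable one_ne_zero)
    (hX₂.differentiable one_ne_zero) hadm
  have hmax := hlift.ae_mul_eq_abs hadm
  exact
    { lipschitzOnWith₁ := exists_lipschitzOnWith_phiF hX₁ hq hlam isCompact_Icc
      lipschitzOnWith₂ := exists_lipschitzOnWith_phiF hX₂ hq hlam isCompact_Icc
      continuousOn_bracket := hlam.continuousOn.inner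
        ((continuous_lieBracketVF hX₁ hX₂).comp_continuousOn hq.continuousOn)
      bracket_ne_zero := hbr
      hasDerivAt₁ := hderiv.mono fun t h ht => (h ht).1
      hasDerivAt₂ := hderiv.mono fun t h ht => (h ht).2
      mul_eq_abs₁ := hmax.mono fun t h ht => (h ht).1
      mul_eq_abs₂ := hmax.mono fun t h ht => (h ht).2 }

end IsExtremalLift

end Extremal

theorem statement_17_general (X₁ X₂ : E3 → E3) (hX₁ : ContDiff ℝ (⊤ : ℕ∞) X₁)
    (hX₂ : ContDiff ℝ (⊤ : ℕ∞) X₂) (Ω : Set E3) :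
    ∃ T > (0:ℝ), ∀ (T' : ℝ) (q : ℝ → E3) (u : ℝ → ℝ × ℝ) (lam : ℝ → E3),
      0 < T' → T' ≤ T → IsAdmissiblePair X₁ X₂ T' q u →
      (∀ t ∈ Icc (0:ℝ) T', q t ∈ Ω) → IsTimeOptimal X₁ X₂ T' q →
      IsExtremalLift X₁ X₂ T' q u lam →
      (∀ t ∈ Icc (0:ℝ) T', phiF (X12 X₁ X₂) q lam t ≠ 0) →
      IsBangBang T' (phiF X₁ q lam) (phiF X₂ q lam) := by
  refine ⟨1, one_pos, fun T' q u lam hT' _ hadm _ hopt hlift hbr => ?_⟩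
  have h := hlift.switchingFunctions (hX₁.of_le (by simp)) (hX₂.of_le (by simp)) hadm hbr
  exact h.isBangBang hT' fun hH => hopt.apply_ne hT'
    (hadm.apply_eq_of_ae_eq_zero (h.ae_eq_zero_of_abs_add_abs_eq_zero hT'.le hH))

/-- If `X₁, X₂, [X₁,X₂]` are linearly independent on the closure of
a bounded open set `Ω`, then there is `T > 0` such that every time-optimal trajectory
contained in `Ω` of duration `T' ≤ T` admitting an extremal lift whose bracket
function `φ₁₂` never vanishes is bang-bang. -/
theorem statement_17 (X₁ X₂ : E3 → E3) (hX₁ : ContDiff ℝ (⊤ : ℕ∞) X₁)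
    (hX₂ : ContDiff ℝ (⊤ : ℕ∞) X₂) (Ω : Set E3) (hΩopen : IsOpen Ω)
    (hΩbdd : Bornology.IsBounded Ω)
    (hli : ∀ x ∈ closure Ω, LinearIndependent ℝ ![X₁ x, X₂ x, X12 X₁ X₂ x]) :
    ∃ T > (0:ℝ), ∀ (T' : ℝ) (q : ℝ → E3) (u : ℝ → ℝ × ℝ) (lam : ℝ → E3),
      0 < T' → T' ≤ T → IsAdmissiblePair X₁ X₂ T' q u →
      (∀ t ∈ Icc (0:ℝ) T', q t ∈ Ω) → IsTimeOptimal X₁ X₂ T' q →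
      IsExtremalLift X₁ X₂ T' q u lam →
      (∀ t ∈ Icc (0:ℝ) T', phiF (X12 X₁ X₂) q lam t ≠ 0) →
      IsBangBang T' (phiF X₁ q lam) (phiF X₂ q lam) :=
  statement_17_general X₁ X₂ hX₁ hX₂ Ω

end
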